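/- arXiv:math/0212073 — 4 statements merged into one kernel-verified Lean document; each statement's English description precedes it below -/
import Mathlib

section
/- Let R be a commutative ring containing ℚ, let H(S,U) be a homogeneous polynomial of degree n in two variables with coefficients in R, and let x, y, z ∈ R with z ∈ (x,y). Denote by H^{(m)} the m-th partial derivative of H with respect to the first variable. If H^{(n-i)}(z,x) ∈ y^i R for i = 0, …, n-1, then H(z,x) ∈ (x^n, y^n). -/
open MvPolynomial

private lemma homog_eval_mul {R : Type*} [CommRing R] {n : ℕ}
    {H : MvPolynomial (Fin 2) R} (hH : H.IsHomogeneous n) (c : R) (v : Fin 2 → R) :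
    eval (fun i => c * v i) H = c ^ n * eval v H := by
  rw [eval_eq, eval_eq, Finset.mul_sum]
  refine Finset.sum_congr rfl fun d hd => ?_
  rw [MvPolynomial.mem_support_iff] at hd
  have hdeg : ∑ i ∈ d.support, d i = n := by
    have := hH hd
    simpa [Finsupp.weight_apply, Finsupp.sum] using this
  calc coeff d H * ∏ i ∈ d.support, (c * v i) ^ d i
      = coeff d H * ((∏ i ∈ d.support, c ^ d i) * ∏ i ∈ d.support, v i ^ d i) := by
        rw [← Finset.prod_mul_distrib]; simp [mul_pow]
    _ = c ^ n * (coeff d H * ∏ i ∈ d.support, v i ^ d i) := by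
        rw [Finset.prod_pow_eq_pow_sum, hdeg]; ring

private lemma aeval_pderiv_comm {R : Type*} [CommRing R] (x : R)
    (H : MvPolynomial (Fin 2) R) :
    Polynomial.derivative (MvPolynomial.aeval ![Polynomial.X, Polynomial.C x] H)
      = MvPolynomial.aeval ![Polynomial.X, Polynomial.C x] (pderiv (0 : Fin 2) H) := by
  induction H using MvPolynomial.induction_on with
  | C a => simp
  | add p q hp hq => simp [hp, hq]
  | mul_X p i hp =>
    rw [map_mul, Polynomial.derivative_mul, hp, pderiv_mul, map_add, map_mul, pderiv_X]
    fin_cases i <;> simp [Pi.single_apply]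

/-- Lemma 1.1: over a ring containing ℚ, if `H` is homogeneous of degree `n`,
`z ∈ (x,y)`, and `H^{(n-i)}(z,x) ∈ y^i R` for `i = 0, …, n-1`, then
`H(z,x) ∈ (x^n, y^n)`. Here `H^{(m)}` is the `m`-th partial derivative with
respect to the first variable. -/
theorem stmt_10 (R : Type*) [CommRing R] [Algebra ℚ R]
    (n : ℕ) (H : MvPolynomial (Fin 2) R) (hH : H.IsHomogeneous n)
    (x y z : R) (hz : z ∈ Ideal.span ({x, y} : Set R))
    (hder : ∀ i < n,
      eval ![z, x] ((⇑(pderiv (0 : Fin 2)))^[n - i] H) ∈ Ideal.span ({y ^ i} : Set R)) :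
    eval ![z, x] H ∈ Ideal.span ({x ^ n, y ^ n} : Set R) := by
  obtain ⟨a, b, hab⟩ := Ideal.mem_span_pair.mp hz
  set f : Fin 2 → Polynomial R := ![Polynomial.X, Polynomial.C x] with hf
  set p : Polynomial R := MvPolynomial.aeval f H with hp
  -- evaluation compatibility
  have heval : ∀ (G : MvPolynomial (Fin 2) R) (t : R),
      (MvPolynomial.aeval f G).eval t = eval ![t, x] G := by
    intro G t
    induction G using MvPolynomial.induction_on with
    | C a => simp [hf]
    | add p q hp hq => simp [hp, hq]
    | mul_X q i hq =>
      rw [map_mul, Polynomial.eval_mul, hq, map_mul]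
      congr 1
      fin_cases i <;> simp [hf]
  -- iterated derivative compatibility
  have hiter : ∀ k, (⇑Polynomial.derivative)^[k] p
      = MvPolynomial.aeval f ((⇑(pderiv (0 : Fin 2)))^[k] H) := by
    intro k
    induction k with
    | zero => simp [hp]
    | succ k ih =>
      rw [show (⇑(pderiv (0 : Fin 2)))^[k + 1] H = pderiv 0 ((⇑(pderiv (0 : Fin 2)))^[k] H)
        from Function.iterate_succ_apply' _ _ _,
        Function.iterate_succ_apply', ih, hf, aeval_pderiv_comm]
  -- degree bound
  have hdeg : p.natDegree ≤ n := by
    rw [hp, H.as_sum, map_sum]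
    refine Polynomial.natDegree_sum_le_of_forall_le _ _ fun d hd => ?_
    rw [MvPolynomial.mem_support_iff] at hd
    have hdn : (Finsupp.weight 1) d = n := hH hd
    have hd0 : d 0 ≤ n := by
      rw [← hdn]
      simp only [Finsupp.weight_apply, Finsupp.sum, smul_eq_mul, Pi.one_apply, mul_one]
      by_cases h : d 0 = 0
      · simp [h]
      · exact Finset.single_le_sum (f := fun i => d i) (fun _ _ => Nat.zero_le _)
          (Finsupp.mem_support_iff.mpr h)
    have hmono : MvPolynomial.aeval f (monomial d (coeff d H))
        = Polynomial.C (coeff d H) * (Polynomial.X ^ d 0 * Polynomial.C x ^ d 1) := by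
      rw [aeval_monomial, hf, Finsupp.prod_fintype _ _ (fun i => pow_zero _),
        Fin.prod_univ_two]
      simp [Polynomial.algebraMap_eq]
    rw [hmono]
    refine le_trans Polynomial.natDegree_mul_le ?_
    simp only [Polynomial.natDegree_C, zero_add]
    refine le_trans Polynomial.natDegree_mul_le ?_
    have e1 : ((Polynomial.X : Polynomial R) ^ d 0).natDegree ≤ d 0 :=
      Polynomial.natDegree_pow_le.trans
        (by simpa using Nat.mul_le_mul_left (d 0) (Polynomial.natDegree_X_le (R := R)))
    have e2 : (Polynomial.C x ^ d 1).natDegree ≤ 0 :=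
      Polynomial.natDegree_pow_le.trans (by simp)
    omega
  -- key ideal facts
  have hyIdeal : ∀ k, 1 ≤ k → k ≤ n →
      (Polynomial.hasseDeriv k p).eval z ∈ Ideal.span ({y ^ (n - k)} : Set R) := by
    intro k hk1 hkn
    have hfac : Nat.factorial k • Polynomial.hasseDeriv k p
        = (⇑Polynomial.derivative)^[k] p := by
      have h := congrFun (Polynomial.factorial_smul_hasseDeriv (R := R) k) p
      simpa using h
    have h2 : ((⇑Polynomial.derivative)^[k] p).eval z
        ∈ Ideal.span ({y ^ (n - k)} : Set R) := by
      rw [hiter, heval]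
      have := hder (n - k) (by omega)
      rwa [show n - (n - k) = k by omega] at this
    have h1 : (Nat.factorial k : R) * (Polynomial.hasseDeriv k p).eval z
        ∈ Ideal.span ({y ^ (n - k)} : Set R) := by
      have heq : (Nat.factorial k : R) * (Polynomial.hasseDeriv k p).eval z
          = ((⇑Polynomial.derivative)^[k] p).eval z := by
        rw [← hfac, nsmul_eq_mul]
        simp
      rw [heq]
      exact h2
    have h3 : (Polynomial.hasseDeriv k p).eval z
        = ((Nat.factorial k : ℚ))⁻¹ • ((Nat.factorial k : R)
            * (Polynomial.hasseDeriv k p).eval z) := by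
      rw [show (Nat.factorial k : R) * (Polynomial.hasseDeriv k p).eval z
          = (Nat.factorial k : ℚ) • (Polynomial.hasseDeriv k p).eval z by
        rw [Algebra.smul_def, map_natCast]]
      rw [smul_smul, inv_mul_cancel₀ (by exact_mod_cast Nat.factorial_ne_zero k), one_smul]
    rw [h3, Algebra.smul_def]
    exact Ideal.mul_mem_left _ _ h1
  -- Taylor expansion of p around z, evaluated at a * x
  have htaylor : p.eval (a * x)
      = ∑ k ∈ Finset.range (p.natDegree + 1),
          (Polynomial.hasseDeriv k p).eval z * (a * x - z) ^ k := by
    conv_lhs => rw [← Polynomial.taylor_eval_sub z p (a * x)]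
    rw [Polynomial.eval_eq_sum_range' (n := p.natDegree + 1)
      (by rw [Polynomial.natDegree_taylor]; omega)]
    exact Finset.sum_congr rfl fun k _ => by rw [Polynomial.taylor_coeff]
  have hsplit : p.eval z = p.eval (a * x)
      - ∑ k ∈ Finset.Ico 1 (p.natDegree + 1),
          (Polynomial.hasseDeriv k p).eval z * (a * x - z) ^ k := by
    rw [htaylor, Finset.range_eq_Ico,
      Finset.sum_eq_sum_Ico_succ_bot (by omega : 0 < p.natDegree + 1)]
    simp [Polynomial.hasseDeriv_zero]
  -- the head term lies in (x^n)
  have hhead : p.eval (a * x) ∈ Ideal.span ({x ^ n} : Set R) := by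
    have : p.eval (a * x) = x ^ n * eval ![a, 1] H := by
      have hv : (fun i => x * ![a, 1] i) = ![a * x, x] := by
        funext i
        fin_cases i <;> simp [mul_comm]
      rw [heval H (a * x), ← homog_eval_mul hH x ![a, 1], hv]
    rw [this]
    exact Ideal.mem_span_singleton.mpr ⟨eval ![a, 1] H, rfl⟩
  -- each tail term lies in (y^n)
  have htail : ∀ k ∈ Finset.Ico 1 (p.natDegree + 1),
      (Polynomial.hasseDeriv k p).eval z * (a * x - z) ^ k
        ∈ Ideal.span ({y ^ n} : Set R) := by
    intro k hk
    rw [Finset.mem_Ico] at hk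
    obtain ⟨hk1, hk2⟩ := hk
    have hkn : k ≤ n := by omega
    obtain ⟨c, hc⟩ := Ideal.mem_span_singleton.mp (hyIdeal k hk1 hkn)
    have haz : a * x - z = -(b * y) := by rw [← hab]; ring
    rw [hc, haz]
    refine Ideal.mem_span_singleton.mpr ⟨c * (-b) ^ k, ?_⟩
    have hnk : y ^ n = y ^ (n - k) * y ^ k := by
      rw [← pow_add]
      congr 1
      omega
    rw [hnk]
    ring
  have hz' : eval ![z, x] H = p.eval z := (heval H z).symm
  rw [hz', hsplit]
  have h1 : p.eval (a * x) ∈ Ideal.span ({x ^ n, y ^ n} : Set R) :=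
    Ideal.span_mono (Set.singleton_subset_iff.mpr (by simp)) hhead
  have h2 : (∑ k ∈ Finset.Ico 1 (p.natDegree + 1),
      (Polynomial.hasseDeriv k p).eval z * (a * x - z) ^ k)
        ∈ Ideal.span ({x ^ n, y ^ n} : Set R) :=
    Ideal.sum_mem _ fun k hk =>
      Ideal.span_mono (Set.singleton_subset_iff.mpr (by simp)) (htail k hk)
  exact Ideal.sub_mem _ h1 h2
end

section
/- Let R be a Noetherian local integrally closed domain of dimension 3 with system of parameters p, x, y (so x, y is a regular sequence). For each i ≥ 1, let J_i = { r ∈ R : p^N r ∈ (x^i, y^i) for some N } and Q_i = J_i/(x^i, y^i). Then each Q_i is an R-module of finite length. -/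
universe u v

lemma aux_artinian_of_isMaximal_torsion {R : Type u} [CommRing R] {M : Type v}
    [AddCommGroup M] [Module R M] [Module.Finite R M] (m : Ideal R) [m.IsMaximal]
    (h : Module.IsTorsionBySet R M m) : IsArtinian R M := by
  letI : Module (R ⧸ m) M := h.module
  haveI : IsScalarTower R (R ⧸ m) M := h.isScalarTower
  haveI : Module.Finite (R ⧸ m) M := Module.Finite.of_restrictScalars_finite R (R ⧸ m) M
  haveI : IsArtinianRing (R ⧸ m) :=
    letI := Ideal.Quotient.field m; DivisionRing.instIsArtinianRing
  haveI : IsArtinian (R ⧸ m) M := isArtinian_of_fg_of_artinian'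
  let emb : Submodule R M ↪o Submodule (R ⧸ m) M :=
    { toFun := fun N =>
        { carrier := N
          add_mem' := fun ha hb => N.add_mem ha hb
          zero_mem' := N.zero_mem
          smul_mem' := fun c x hx => Quotient.inductionOn' c fun r => by
            show Ideal.Quotient.mk m r • x ∈ N
            exact N.smul_mem r hx }
      inj' := fun A B hAB => by
        ext z
        exact SetLike.ext_iff.mp hAB z
      map_rel_iff' := Iff.rfl }
  exact emb.wellFoundedLT

lemma aux_artinian_of_pow_smul_eq_bot {R : Type u} [CommRing R] [IsNoetherianRing R]
    (m : Ideal R) [m.IsMaximal] :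
    ∀ (k : ℕ) (M : Type v) [AddCommGroup M] [Module R M] [Module.Finite R M],
      m ^ k • (⊤ : Submodule R M) = ⊥ → IsArtinian R M := by
  intro k
  induction k with
  | zero =>
    intro M _ _ _ h
    rw [pow_zero, Ideal.one_eq_top, Submodule.top_smul] at h
    haveI : Subsingleton M := by
      constructor
      intro a b
      have ha : a - b ∈ (⊥ : Submodule R M) := h ▸ Submodule.mem_top
      simpa [sub_eq_zero] using ha
    exact isArtinian_of_finite
  | succ n ih =>
    intro M _ _ _ h
    set N : Submodule R M := m ^ n • (⊤ : Submodule R M) with hNdef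
    have hmN : m • N = ⊥ := by
      rw [hNdef, ← Submodule.smul_assoc, smul_eq_mul, ← pow_succ']
      exact h
    have hN : Module.IsTorsionBySet R N m := by
      rintro ⟨x, hx⟩ ⟨r, hr⟩
      apply Subtype.ext
      have : r • x ∈ m • N := Submodule.smul_mem_smul hr hx
      rw [hmN] at this
      simpa using this
    haveI : Module.Finite R N := Module.Finite.iff_fg.mpr (IsNoetherian.noetherian N)
    have hA1 : IsArtinian R N := aux_artinian_of_isMaximal_torsion m hN
    have hq : m ^ n • (⊤ : Submodule R (M ⧸ N)) = ⊥ := by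
      rw [eq_bot_iff]
      apply Submodule.smul_le.mpr
      intro r hr z _
      obtain ⟨w, rfl⟩ := Submodule.Quotient.mk_surjective N z
      rw [← Submodule.Quotient.mk_smul, Submodule.mem_bot, Submodule.Quotient.mk_eq_zero]
      exact Submodule.smul_mem_smul hr Submodule.mem_top
    have hA2 : IsArtinian R (M ⧸ N) := ih (M ⧸ N) hq
    exact (isArtinian_iff_submodule_quotient N).mpr ⟨hA1, hA2⟩

/-- Lemma 1.2(1): let `R` be a Noetherian local integrally closed domain of
dimension 3 with system of parameters `p, x, y`.  For each `i ≥ 1`, let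
`J_i = { r ∈ R : p^N r ∈ (x^i, y^i) for some N }` (realized as
`⨆ N, ((x^i, y^i) : (p^N))`) and `Q_i = J_i/(x^i, y^i)`.  Then each `Q_i`
has finite length as an `R`-module. -/
theorem stmt_14 (R : Type*) [CommRing R] [IsDomain R] [IsNoetherianRing R]
    [IsLocalRing R] [IsIntegrallyClosed R]
    (hdim : ringKrullDim R = 3)
    (p x y : R)
    (hp : p ∈ IsLocalRing.maximalIdeal R) (hx : x ∈ IsLocalRing.maximalIdeal R)
    (hy : y ∈ IsLocalRing.maximalIdeal R)
    (hsop : (Ideal.span ({p, x, y} : Set R)).radical = IsLocalRing.maximalIdeal R)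
    (i : ℕ) (hi : 1 ≤ i)
    (I J : Ideal R)
    (hI : I = Ideal.span ({x ^ i, y ^ i} : Set R))
    (hJ : J = ⨆ N : ℕ, I.colon (Ideal.span ({p ^ N} : Set R))) :
    IsFiniteLength R (J ⧸ (Submodule.comap J.subtype I)) := by
  set Q := J ⧸ (Submodule.comap J.subtype I) with hQ
  -- the colon ideals form a monotone chain
  have fmono : Monotone (fun N : ℕ => I.colon (Ideal.span ({p ^ N} : Set R))) := by
    intro a b hab
    apply Submodule.colon_mono le_rfl
    rw [SetLike.coe_subset_coe, Ideal.span_le, Set.singleton_subset_iff]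
    exact Ideal.mem_span_singleton.mpr (pow_dvd_pow p hab)
  obtain ⟨n, hn⟩ := monotone_stabilizes_iff_noetherian.mpr inferInstance
    (⟨fun N => I.colon (Ideal.span ({p ^ N} : Set R)), fmono⟩ : ℕ →o Ideal R)
  have hJn : J = I.colon (Ideal.span ({p ^ n} : Set R)) := by
    rw [hJ]
    apply le_antisymm
    · apply iSup_le
      intro N
      rcases le_total N n with h | h
      · exact fmono h
      · exact le_of_eq (hn N h).symm
    · exact le_iSup (fun N => I.colon (Ideal.span ({p ^ N} : Set R))) n
  -- key annihilation facts
  have hxI : x ^ i ∈ I := by rw [hI]; exact Ideal.subset_span (Set.mem_insert _ _)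
  have hyI : y ^ i ∈ I := by
    rw [hI]; exact Ideal.subset_span (Set.mem_insert_of_mem _ rfl)
  have hpJ : ∀ r ∈ J, p ^ n * r ∈ I := by
    intro r hr
    rw [hJn] at hr
    have := Submodule.mem_colon.mp hr (p ^ n) (Ideal.mem_span_singleton_self _)
    rwa [smul_eq_mul, mul_comm] at this
  set K : Ideal R := Ideal.span ({p ^ n, x ^ i, y ^ i} : Set R) with hK
  -- each generator of K annihilates Q
  have hgen : ∀ a : R, (∀ r ∈ J, a * r ∈ I) → a ∈ Module.annihilator R Q := by
    intro a ha
    rw [Module.mem_annihilator]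
    intro z
    obtain ⟨⟨r, hr⟩, rfl⟩ := Submodule.Quotient.mk_surjective _ z
    rw [← Submodule.Quotient.mk_smul, Submodule.Quotient.mk_eq_zero]
    show (a • (⟨r, hr⟩ : J) : R) ∈ I
    simpa [smul_eq_mul] using ha r hr
  have hKann : K ≤ Module.annihilator R Q := by
    rw [hK, Ideal.span_le]
    rintro a (rfl | rfl | rfl)
    · exact hgen _ hpJ
    · exact hgen _ fun r _ => Ideal.mul_mem_right r I hxI
    · exact hgen _ fun r _ => Ideal.mul_mem_right r I hyI
  -- the maximal ideal is contained in the radical of K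
  have hrad : IsLocalRing.maximalIdeal R ≤ K.radical := by
    rw [← hsop]
    have h1 : Ideal.span ({p, x, y} : Set R) ≤ K.radical := by
      rw [Ideal.span_le]
      rintro a (rfl | rfl | rfl)
      · exact ⟨n, Ideal.subset_span (Set.mem_insert _ _)⟩
      · exact ⟨i, Ideal.subset_span (Set.mem_insert_of_mem _ (Set.mem_insert _ _))⟩
      · exact ⟨i, Ideal.subset_span
          (Set.mem_insert_of_mem _ (Set.mem_insert_of_mem _ rfl))⟩
    calc (Ideal.span ({p, x, y} : Set R)).radical
        ≤ K.radical.radical := Ideal.radical_mono h1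
      _ = K.radical := K.radical_idem
  obtain ⟨k, hk⟩ := Ideal.exists_pow_le_of_le_radical_of_fg hrad
    (IsNoetherian.noetherian (IsLocalRing.maximalIdeal R))
  have hsmul : (IsLocalRing.maximalIdeal R) ^ k • (⊤ : Submodule R Q) = ⊥ := by
    rw [eq_bot_iff]
    apply Submodule.smul_le.mpr
    intro r hr z _
    simpa using Module.mem_annihilator.mp (hKann (hk hr)) z
  haveI : Module.Finite R J := Module.Finite.iff_fg.mpr (IsNoetherian.noetherian J)
  have hart : IsArtinian R Q :=
    aux_artinian_of_pow_smul_eq_bot (IsLocalRing.maximalIdeal R) k Q hsmul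
  exact isFiniteLength_iff_isNoetherian_isArtinian.mpr ⟨inferInstance, hart⟩
end

section
/- Let R be a Noetherian local ring and x, y a regular sequence in R. Then for all integers k ≥ n ≥ 1 and m ≥ 0, the map R/(x^n, y^n) → R/(x^k, y^k) induced by multiplication by x^{k-n} y^{k-n} is injective. -/
/-- Let `R` be a Noetherian local ring and `x, y` a regular sequence in `R`.
Then for `k ≥ n ≥ 1`, the map `R/(x^n, y^n) → R/(x^k, y^k)` induced by
multiplication by `x^{k-n} y^{k-n}` is injective. -/
theorem stmt_16 (R : Type*) [CommRing R] [IsNoetherianRing R] [IsLocalRing R]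
    (x y : R)
    (hx : ∀ a : R, x * a = 0 → a = 0)
    (hy : ∀ a : R, y * a ∈ Ideal.span ({x} : Set R) → a ∈ Ideal.span ({x} : Set R))
    (hxy : Ideal.span ({x, y} : Set R) ≠ ⊤)
    (k n : ℕ) (hn : 1 ≤ n) (hk : n ≤ k) :
    ∀ r : R, x ^ (k - n) * y ^ (k - n) * r ∈ Ideal.span ({x ^ k, y ^ k} : Set R) →
      r ∈ Ideal.span ({x ^ n, y ^ n} : Set R) := by
  -- Powers of x are regular
  have hxreg : ∀ (m : ℕ) (a : R), x ^ m * a = 0 → a = 0 := by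
    intro m
    induction m with
    | zero => intro a ha; simpa using ha
    | succ m ih =>
      intro a ha
      apply ih
      apply hx
      rw [← mul_assoc, mul_comm x (x ^ m)]
      simpa [pow_succ, mul_assoc] using ha
  -- y is regular mod (x^m)
  have L1 : ∀ (m : ℕ) (a : R), y * a ∈ Ideal.span ({x ^ m} : Set R) →
      a ∈ Ideal.span ({x ^ m} : Set R) := by
    intro m
    induction m with
    | zero => intro a _; simp [Ideal.mem_span_singleton]
    | succ m ih =>
      intro a ha
      rw [Ideal.mem_span_singleton] at ha
      obtain ⟨c, hc⟩ := ha
      have ham : a ∈ Ideal.span ({x ^ m} : Set R) := by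
        apply ih
        rw [Ideal.mem_span_singleton]
        exact ⟨x * c, by rw [hc]; ring⟩
      rw [Ideal.mem_span_singleton] at ham
      obtain ⟨a', ha'⟩ := ham
      have key : x ^ m * (y * a' - x * c) = 0 := by
        have h' : y * (x ^ m * a') = x ^ (m + 1) * c := by rw [← ha', hc]
        linear_combination h'
      have hya' : y * a' = x * c := by
        have h0 := hxreg m _ key
        linear_combination h0
      have : a' ∈ Ideal.span ({x} : Set R) := by
        apply hy
        rw [Ideal.mem_span_singleton]
        exact ⟨c, hya'⟩
      rw [Ideal.mem_span_singleton] at this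
      obtain ⟨a'', ha''⟩ := this
      rw [Ideal.mem_span_singleton]
      exact ⟨a'', by rw [ha', ha'']; ring⟩
  -- y^j is regular mod (x^m)
  have L2 : ∀ (j m : ℕ) (a : R), y ^ j * a ∈ Ideal.span ({x ^ m} : Set R) →
      a ∈ Ideal.span ({x ^ m} : Set R) := by
    intro j
    induction j with
    | zero => intro m a ha; simpa using ha
    | succ j ih =>
      intro m a ha
      apply L1
      apply ih
      have h' : y ^ j * (y * a) = y ^ (j + 1) * a := by ring
      rwa [h']
  obtain ⟨d, rfl⟩ : ∃ d, k = n + d := ⟨k - n, by omega⟩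
  intro r hr
  have hdn : n + d - n = d := by omega
  rw [hdn] at hr
  rw [Ideal.mem_span_pair] at hr
  obtain ⟨a, b, hab⟩ := hr
  have h1 : x ^ d * r - b * y ^ n ∈ Ideal.span ({x ^ (n + d)} : Set R) := by
    apply L2 d
    rw [Ideal.mem_span_singleton]
    refine ⟨a, ?_⟩
    rw [pow_add y n d] at hab
    linear_combination -hab
  rw [Ideal.mem_span_singleton] at h1
  obtain ⟨c, hc⟩ := h1
  have h2 : x ^ d * (r - x ^ n * c) = b * y ^ n := by
    rw [pow_add x n d] at hc
    linear_combination hc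
  have hb : b ∈ Ideal.span ({x ^ d} : Set R) := by
    apply L2 n
    rw [Ideal.mem_span_singleton]
    exact ⟨r - x ^ n * c, by linear_combination -h2⟩
  rw [Ideal.mem_span_singleton] at hb
  obtain ⟨b', hb'⟩ := hb
  have key : x ^ d * (r - x ^ n * c - y ^ n * b') = 0 := by
    linear_combination h2 + y ^ n * hb'
  have hr0 : r = c * x ^ n + b' * y ^ n := by
    have h0 := hxreg d _ key
    linear_combination h0
  rw [Ideal.mem_span_pair]
  exact ⟨c, b', hr0.symm⟩
end

section
/- Let p be a prime and L, j, i integers with 0 < j ≤ i ≤ p^L. Then the p-adic valuation of C(p^L - j, i - j) is independent of L: for any L' with i ≤ p^{L'}, v_p(C(p^L - j, i - j)) = v_p(C(p^{L'} - j, i - j)). -/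
/-- If `0 < m < p^L`, then `v_p(p^L - m) = v_p(m)`. -/
lemma padicValNat_pow_sub (p : ℕ) (hp : p.Prime) {m L : ℕ} (h0 : 0 < m) (h : m < p ^ L) :
    padicValNat p (p ^ L - m) = padicValNat p m := by
  haveI := Fact.mk hp
  set v := padicValNat p m with hv
  obtain ⟨u, hu⟩ : p ^ v ∣ m := pow_padicValNat_dvd
  have hvL : v < L := by
    have h1 : p ^ v ≤ m := Nat.le_of_dvd h0 pow_padicValNat_dvd
    exact (Nat.pow_lt_pow_iff_right hp.one_lt).mp (lt_of_le_of_lt h1 h)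
  have hpv : (0:ℕ) < p ^ v := Nat.pow_pos hp.pos
  have hu0 : 0 < u := by
    rcases Nat.eq_zero_or_pos u with h' | h'
    · subst h'; simp at hu; omega
    · exact h'
  have hpu : ¬ p ∣ u := by
    intro hd
    have h2 : p ^ (padicValNat p m + 1) ∣ m := by
      rw [← hv, pow_succ, hu]
      exact Nat.mul_dvd_mul_left _ hd
    exact pow_succ_padicValNat_not_dvd (p := p) h0.ne' h2
  have hpow : p ^ v * p ^ (L - v) = p ^ L := by
    rw [← pow_add]; congr 1; omega
  have hlt : u < p ^ (L - v) := by
    by_contra hle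
    push_neg at hle
    have : p ^ L ≤ m := by
      rw [hu, ← hpow]
      exact Nat.mul_le_mul_left _ hle
    omega
  have key : p ^ L - m = p ^ v * (p ^ (L - v) - u) := by
    rw [Nat.mul_sub, hpow, ← hu]
  have hnd : ¬ p ∣ (p ^ (L - v) - u) := by
    intro hd
    apply hpu
    have hdvd : p ∣ p ^ (L - v) := dvd_pow_self p (by omega)
    have := Nat.dvd_sub hdvd hd
    rwa [Nat.sub_sub_self hlt.le] at this
  rw [key, padicValNat.mul (by positivity) (by omega), padicValNat.prime_pow,
    padicValNat.eq_zero_of_not_dvd hnd, add_zero]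

/-- The valuation of the descending factorial `(p^L - j).descFactorial (i - j)`
is independent of `L`. -/
lemma padicValNat_descFactorial_eq (p : ℕ) (hp : p.Prime) (L i j : ℕ)
    (hj : 0 < j) (hji : j ≤ i) (hi : i ≤ p ^ L) :
    padicValNat p ((p ^ L - j).descFactorial (i - j))
      = ∑ t ∈ Finset.range (i - j), padicValNat p (j + t) := by
  rw [Nat.descFactorial_eq_prod_range]
  have hne : ∀ t ∈ Finset.range (i - j), p ^ L - j - t ≠ 0 := by
    intro t ht
    simp only [Finset.mem_range] at ht
    omega
  rw [← Nat.factorization_def _ hp, Nat.factorization_prod hne]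
  rw [Finsupp.finset_sum_apply]
  apply Finset.sum_congr rfl
  intro t ht
  simp only [Finset.mem_range] at ht
  rw [Nat.factorization_def _ hp]
  have : p ^ L - j - t = p ^ L - (j + t) := by omega
  rw [this, padicValNat_pow_sub p hp (by omega) (by omega)]

/-- For a prime `p` and `0 < j ≤ i ≤ p^L`, the `p`-adic valuation of
`C(p^L - j, i - j)` is independent of `L`: if also `i ≤ p^{L'}`, then
`v_p(C(p^L - j, i - j)) = v_p(C(p^{L'} - j, i - j))`. -/
theorem stmt_18 (p : ℕ) (hp : p.Prime) (L L' i j : ℕ)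
    (hj : 0 < j) (hji : j ≤ i) (hi : i ≤ p ^ L) (hi' : i ≤ p ^ L') :
    padicValNat p ((p ^ L - j).choose (i - j))
      = padicValNat p ((p ^ L' - j).choose (i - j)) := by
  haveI := Fact.mk hp
  have key : ∀ M : ℕ, i ≤ p ^ M →
      padicValNat p (Nat.factorial (i - j)) + padicValNat p ((p ^ M - j).choose (i - j))
        = ∑ t ∈ Finset.range (i - j), padicValNat p (j + t) := by
    intro M hM
    rw [← padicValNat.mul (Nat.factorial_ne_zero _)
        (Nat.choose_pos (by omega)).ne',
      ← Nat.descFactorial_eq_factorial_mul_choose,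
      padicValNat_descFactorial_eq p hp M i j hj hji hM]
  have h1 := key L hi
  have h2 := key L' hi'
  omega
end
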